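/- Let f : [0,T) × [0,1] → ℝⁿ be a smooth solution of ∂ₜf = V + φτ (V the normal velocity, φ a smooth scalar function) whose endpoint x = 1 is fixed in time, i.e. ∂ₜf(t,1) = 0 for all t. Then φ(t,1) = 0 and φ(t,0) = − d/dt L(f(t,·)) − ∫₀¹ ⟨κ, V⟩ ds for all t ∈ (0,T). Moreover, if V = −∇ₛ²κ − ½|κ|²κ + λκ for a constant λ and κ(t,0) = κ(t,1) = 0 for all t, then d/dt L(f(t,·)) + φ(t,0) + ∫₀¹ |∇ₛκ|² ds + λ ∫₀¹ |κ|² ds = ½ ∫₀¹ |κ|⁴ ds. -/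

import Mathlib

open Set MeasureTheory
open scoped RealInnerProductSpace

noncomputable section

/-- Arc-length derivative `∂ₛ g = |∂ₓ f|⁻¹ ∂ₓ g` along the curve `f`. -/
def sDeriv {n : ℕ} {F : Type*} [NormedAddCommGroup F] [NormedSpace ℝ F]
    (f : ℝ → EuclideanSpace ℝ (Fin n)) (g : ℝ → F) (x : ℝ) : F :=
  ‖deriv f x‖⁻¹ • deriv g x

/-- The unit tangent `τ = ∂ₛ f`. -/
def tau {n : ℕ} (f : ℝ → EuclideanSpace ℝ (Fin n)) : ℝ → EuclideanSpace ℝ (Fin n) :=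
  sDeriv f f

/-- The curvature vector `κ = ∂ₛ² f`. -/
def kappa {n : ℕ} (f : ℝ → EuclideanSpace ℝ (Fin n)) : ℝ → EuclideanSpace ℝ (Fin n) :=
  sDeriv f (tau f)

/-- Normal projection of the arc-length derivative: `∇ₛψ = ∂ₛψ − ⟨∂ₛψ, τ⟩ τ`. -/
def nablaS {n : ℕ} (f ψ : ℝ → EuclideanSpace ℝ (Fin n)) (x : ℝ) :
    EuclideanSpace ℝ (Fin n) :=
  sDeriv f ψ x - ⟪sDeriv f ψ x, tau f x⟫ • tau f x

/-- Partial time derivative of a time-dependent field. -/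
def pT {F : Type*} [NormedAddCommGroup F] [NormedSpace ℝ F]
    (g : ℝ → ℝ → F) (t x : ℝ) : F :=
  deriv (fun s => g s x) t

/-- Length of the curve `f` over `[0,1]`. -/
def curveLen {n : ℕ} (f : ℝ → EuclideanSpace ℝ (Fin n)) : ℝ :=
  ∫ x in (0 : ℝ)..1, ‖deriv f x‖

open Function Filter Topology

/-! Pairing the flow with the unit tangent reads off the tangential speed, so at the fixed end
`0 = ⟪∂ₜf, τ⟫ = φ`. Since mixed partials commute, `∂ₜ|∂ₓf| = ⟪∂ₓ(∂ₜf), τ⟫`, and for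
`∂ₜf = V + φτ` with `V` normal this equals `∂ₓφ - ⟪κ, V⟫ |∂ₓf|`: indeed `⟪∂ₓV, τ⟫ = -⟪V, ∂ₓτ⟫`
and `∂ₓτ = |∂ₓf| κ ⟂ τ`. Integrating over `[0,1]` gives the formula for `φ(t,0)`.
For the elastic velocity, `∂ₛ⟪κ, ∇ₛκ⟫ = |∇ₛκ|² + ⟪κ, ∇ₛ²κ⟫` because both fields are normal, and the
boundary term vanishes as `κ = 0` at the ends; so `∫⟪κ, V⟫ ds = ∫|∇ₛκ|² ds - ½∫|κ|⁴ ds + λ∫|κ|² ds`.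
-/

theorem HasDerivAt.norm {E : Type*} [NormedAddCommGroup E] [InnerProductSpace ℝ E]
    {u : ℝ → E} {u' : E} {x : ℝ} (hu : HasDerivAt u u' x) (hx : u x ≠ 0) :
    HasDerivAt (fun y => ‖u y‖) (⟪u x, u'⟫ / ‖u x‖) x := by
  have h := hu.norm_sq.sqrt (by positivity)
  simp only [Real.sqrt_sq (norm_nonneg _)] at h
  convert h using 1
  field_simp

section PartialDerivatives

variable {E : Type*} [NormedAddCommGroup E] [NormedSpace ℝ E] {g : ℝ → ℝ → E}

theorem ContDiff.uncurry_left {m : WithTop ℕ∞} (t : ℝ) (h : ContDiff ℝ m (uncurry g)) :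
    ContDiff ℝ m (g t) :=
  h.comp (contDiff_const.prodMk contDiff_id)

theorem hasDerivAt_fderiv_fst {t x : ℝ} (h : DifferentiableAt ℝ (uncurry g) (t, x)) :
    HasDerivAt (fun s => g s x) (fderiv ℝ (uncurry g) (t, x) (1, 0)) t :=
  h.hasFDerivAt.comp_hasDerivAt (f := fun s => (s, x)) t
    ((hasDerivAt_id' t).prodMk (hasDerivAt_const t x))

theorem hasDerivAt_fderiv_snd {t x : ℝ} (h : DifferentiableAt ℝ (uncurry g) (t, x)) :
    HasDerivAt (g t) (fderiv ℝ (uncurry g) (t, x) (0, 1)) x :=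
  h.hasFDerivAt.comp_hasDerivAt x ((hasDerivAt_const x t).prodMk (hasDerivAt_id' x))

theorem ContDiff.uncurry_deriv {m : WithTop ℕ∞} (h : ContDiff ℝ (m + 1) (uncurry g)) :
    ContDiff ℝ m (uncurry fun s => deriv (g s)) := by
  have hd : (uncurry fun s => deriv (g s)) = fun p => fderiv ℝ (uncurry g) p (0, 1) :=
    funext fun p => (hasDerivAt_fderiv_snd (h.differentiable (by simp) p)).deriv
  rw [hd]
  exact (h.fderiv_right le_rfl).clm_apply contDiff_const

theorem ContDiff.uncurry_pT {m : WithTop ℕ∞} (h : ContDiff ℝ (m + 1) (uncurry g)) :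
    ContDiff ℝ m (uncurry (pT g)) := by
  have hd : uncurry (pT g) = fun p => fderiv ℝ (uncurry g) p (1, 0) :=
    funext fun p => (hasDerivAt_fderiv_fst (h.differentiable (by simp) p)).deriv
  rw [hd]
  exact (h.fderiv_right le_rfl).clm_apply contDiff_const

theorem pT_deriv_comm (h : ContDiff ℝ 2 (uncurry g)) (t x : ℝ) :
    pT (fun s => deriv (g s)) t x = deriv (pT g t) x := by
  have hF := h.differentiable (by simp)
  have hF' := ((h.fderiv_right (m := 1) (by norm_num)).differentiable (by simp) (t, x)).hasFDerivAt
  have hts : fderiv ℝ (fderiv ℝ (uncurry g)) (t, x) (1, 0) (0, 1) =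
      fderiv ℝ (fderiv ℝ (uncurry g)) (t, x) (0, 1) (1, 0) :=
    h.contDiffAt.isSymmSndFDerivAt (by simp) _ _
  have hdt : HasDerivAt (fun s => deriv (g s) x)
      (fderiv ℝ (fderiv ℝ (uncurry g)) (t, x) (1, 0) (0, 1)) t := by
    rw [show (fun s => deriv (g s) x) = fun s => fderiv ℝ (uncurry g) (s, x) (0, 1) from
      funext fun s => (hasDerivAt_fderiv_snd (hF (s, x))).deriv]
    simpa using (hF'.comp_hasDerivAt (f := fun s => (s, x)) t
      ((hasDerivAt_id' t).prodMk (hasDerivAt_const t x))).clm_apply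
      (hasDerivAt_const t ((0 : ℝ), (1 : ℝ)))
  have hdx : HasDerivAt (pT g t)
      (fderiv ℝ (fderiv ℝ (uncurry g)) (t, x) (0, 1) (1, 0)) x := by
    rw [show pT g t = fun y => fderiv ℝ (uncurry g) (t, y) (1, 0) from
      funext fun y => (hasDerivAt_fderiv_fst (hF (t, y))).deriv]
    simpa using (hF'.comp_hasDerivAt x
      ((hasDerivAt_const x t).prodMk (hasDerivAt_id' x))).clm_apply
      (hasDerivAt_const x ((1 : ℝ), (0 : ℝ)))
  rw [pT, hdt.deriv, hdx.deriv, hts]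

end PartialDerivatives

theorem hasDerivAt_intervalIntegral_of_continuousOn {E : Type*} [NormedAddCommGroup E]
    [NormedSpace ℝ E] {G G' : ℝ → ℝ → E} {U : Set (ℝ × ℝ)} {t a b : ℝ} (hU : IsOpen U)
    (htU : ∀ x ∈ uIcc a b, (t, x) ∈ U) (hG : Continuous (uncurry G))
    (hG' : ContinuousOn (uncurry G') U)
    (hderiv : ∀ p ∈ U, HasDerivAt (fun s => G s p.2) (G' p.1 p.2) p.1) :
    HasDerivAt (fun s => ∫ x in a..b, G s x) (∫ x in a..b, G' t x) t := by
  obtain ⟨δ, hδ, hδU⟩ := (isCompact_singleton.prod isCompact_uIcc).exists_cthickening_subset_open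
    hU (by rintro ⟨s, x⟩ ⟨rfl, hx⟩; exact htU x hx)
  set K := Metric.closedBall t δ ×ˢ uIcc a b
  have hKU : K ⊆ U := by
    rintro ⟨s, x⟩ ⟨hs, hx⟩
    refine hδU (Metric.mem_cthickening_of_dist_le _ (t, x) _ _ ⟨rfl, hx⟩ ?_)
    simpa [Prod.dist_eq] using hs
  obtain ⟨C, hC⟩ :=
    ((isCompact_closedBall t δ).prod isCompact_uIcc).exists_bound_of_continuousOn (hG'.mono hKU)
  have hmem : ∀ x ∈ uIoc a b, ∀ s ∈ Metric.ball t δ, (s, x) ∈ K := fun x hx s hs =>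
    ⟨Metric.ball_subset_closedBall hs, uIoc_subset_uIcc hx⟩
  have hG't : ContinuousOn (G' t) (uIcc a b) :=
    hG'.comp (continuous_const.prodMk continuous_id).continuousOn htU
  refine (intervalIntegral.hasDerivAt_integral_of_dominated_loc_of_deriv_le
    (bound := fun _ => C) (Metric.ball_mem_nhds t hδ)
    (Eventually.of_forall fun s => (hG.uncurry_left s).aestronglyMeasurable)
    ((hG.uncurry_left t).intervalIntegrable a b)
    ((hG't.mono uIoc_subset_uIcc).aestronglyMeasurable measurableSet_uIoc)
    (ae_of_all _ fun x hx s hs => hC _ (hmem x hx s hs)) intervalIntegrable_const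
    (ae_of_all _ fun x hx s hs => hderiv _ (hKU (hmem x hx s hs)))).2

section Curve

variable {n : ℕ} {c : ℝ → EuclideanSpace ℝ (Fin n)} {x : ℝ}

theorem norm_smul_sDeriv {F : Type*} [NormedAddCommGroup F] [NormedSpace ℝ F] (g : ℝ → F)
    (hx : deriv c x ≠ 0) : ‖deriv c x‖ • sDeriv c g x = deriv g x := by
  rw [sDeriv, smul_smul, mul_inv_cancel₀ (norm_ne_zero_iff.2 hx), one_smul]

theorem norm_tau (hx : deriv c x ≠ 0) : ‖tau c x‖ = 1 := by
  rw [tau, sDeriv, norm_smul, norm_inv, norm_norm, inv_mul_cancel₀ (norm_ne_zero_iff.2 hx)]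

theorem inner_add_smul_tau_tau {v : EuclideanSpace ℝ (Fin n)} (hv : ⟪v, tau c x⟫ = 0)
    (hx : deriv c x ≠ 0) (a : ℝ) : ⟪v + a • tau c x, tau c x⟫ = a := by
  rw [inner_add_left, hv, real_inner_smul_left, real_inner_self_eq_norm_sq, norm_tau hx]
  ring

theorem inner_nablaS_of_inner_tau_eq_zero (ψ : ℝ → EuclideanSpace ℝ (Fin n))
    {v : EuclideanSpace ℝ (Fin n)} (hv : ⟪v, tau c x⟫ = 0) :
    ⟪nablaS c ψ x, v⟫ = ⟪sDeriv c ψ x, v⟫ := by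
  rw [nablaS, inner_sub_left, real_inner_smul_left, real_inner_comm v (tau c x), hv, mul_zero,
    sub_zero]

theorem inner_nablaS_tau (ψ : ℝ → EuclideanSpace ℝ (Fin n)) (hx : deriv c x ≠ 0) :
    ⟪nablaS c ψ x, tau c x⟫ = 0 := by
  rw [nablaS, inner_sub_left, real_inner_smul_left, real_inner_self_eq_norm_sq, norm_tau hx]
  ring

theorem differentiableAt_tau (hc : DifferentiableAt ℝ (deriv c) x) (hx : deriv c x ≠ 0) :
    DifferentiableAt ℝ (tau c) x :=
  ((hc.norm ℝ hx).inv (norm_ne_zero_iff.2 hx)).smul hc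

theorem inner_kappa_tau (hc : DifferentiableAt ℝ (deriv c) x) (hx : deriv c x ≠ 0) :
    ⟪kappa c x, tau c x⟫ = 0 := by
  have hunit : (fun y => ‖tau c y‖ ^ 2) =ᶠ[𝓝 x] fun _ => 1 := by
    filter_upwards [hc.continuousAt.eventually_ne hx] with y hy
    rw [norm_tau hy, one_pow]
  have h := (differentiableAt_tau hc hx).hasDerivAt.norm_sq
  have h0 : ⟪tau c x, deriv (tau c) x⟫ = 0 := by
    linarith [(hunit.hasDerivAt_iff.1 h).unique (hasDerivAt_const x 1)]
  rw [kappa, sDeriv, real_inner_smul_left, real_inner_comm, h0, mul_zero]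

theorem inner_deriv_add_smul_tau_tau {V : ℝ → EuclideanSpace ℝ (Fin n)} {φ : ℝ → ℝ}
    (hc : DifferentiableAt ℝ (deriv c) x) (hx : deriv c x ≠ 0)
    (hV : DifferentiableAt ℝ V x) (hφ : DifferentiableAt ℝ φ x)
    (hnormal : ∀ᶠ y in 𝓝 x, ⟪V y, tau c y⟫ = 0) :
    ⟪deriv (fun y => V y + φ y • tau c y) x, tau c x⟫
      = deriv φ x - ⟪kappa c x, V x⟫ * ‖deriv c x‖ := by
  have hτ := differentiableAt_tau hc hx
  have hV' : ⟪deriv V x, tau c x⟫ = -⟪V x, deriv (tau c) x⟫ := by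
    have h := (hV.hasDerivAt.inner ℝ hτ.hasDerivAt).unique
      ((hasDerivAt_const x (0 : ℝ)).congr_of_eventuallyEq hnormal)
    linarith
  have hd : HasDerivAt (fun y => V y + φ y • tau c y)
      (deriv V x + (φ x • deriv (tau c) x + deriv φ x • tau c x)) x :=
    hV.hasDerivAt.add (hφ.hasDerivAt.smul hτ.hasDerivAt)
  rw [hd.deriv, inner_add_left, inner_add_left, hV',
    real_inner_smul_left, real_inner_smul_left, real_inner_self_eq_norm_sq, norm_tau hx,
    ← norm_smul_sDeriv (tau c) hx, ← kappa, real_inner_smul_left, real_inner_smul_right,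
    inner_kappa_tau hc hx, real_inner_comm]
  ring

theorem isOpen_setOf_deriv_ne_zero (hc : Continuous (deriv c)) : IsOpen {y | deriv c y ≠ 0} :=
  isOpen_ne_fun hc continuous_const

variable {m : WithTop ℕ∞}

theorem contDiffOn_sDeriv {F : Type*} [NormedAddCommGroup F] [NormedSpace ℝ F] {g : ℝ → F}
    (hc : ContDiff ℝ (m + 1) c) (hg : ContDiffOn ℝ (m + 1) g {y | deriv c y ≠ 0}) :
    ContDiffOn ℝ m (sDeriv c g) {y | deriv c y ≠ 0} := by
  have hc' := hc.deriv'.contDiffOn (s := {y | deriv c y ≠ 0})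
  exact ((hc'.norm ℝ fun _ hy => hy).inv fun _ hy => norm_ne_zero_iff.2 hy).smul
    (hg.deriv_of_isOpen (isOpen_setOf_deriv_ne_zero (hc.continuous_deriv le_add_self)) le_rfl)

theorem contDiffOn_tau (hc : ContDiff ℝ (m + 1) c) :
    ContDiffOn ℝ m (tau c) {y | deriv c y ≠ 0} :=
  contDiffOn_sDeriv hc hc.contDiffOn

theorem contDiffOn_kappa (hc : ContDiff ℝ (m + 1 + 1) c) :
    ContDiffOn ℝ m (kappa c) {y | deriv c y ≠ 0} :=
  contDiffOn_sDeriv (hc.of_le le_self_add) (contDiffOn_tau hc)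

theorem contDiffOn_nablaS {ψ : ℝ → EuclideanSpace ℝ (Fin n)} (hc : ContDiff ℝ (m + 1) c)
    (hψ : ContDiffOn ℝ (m + 1) ψ {y | deriv c y ≠ 0}) :
    ContDiffOn ℝ m (nablaS c ψ) {y | deriv c y ≠ 0} := by
  have hsψ := contDiffOn_sDeriv hc hψ
  have hτ := contDiffOn_tau hc
  exact hsψ.sub ((hsψ.inner ℝ hτ).smul hτ)

end Curve

section IntegrationByParts

variable {n : ℕ} {c : ℝ → EuclideanSpace ℝ (Fin n)} {a b : ℝ}

theorem integral_inner_nablaS_add_inner_nablaS {ψ χ : ℝ → EuclideanSpace ℝ (Fin n)}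
    (hc : ContDiff ℝ 1 c) (hreg : ∀ x ∈ uIcc a b, deriv c x ≠ 0)
    (hψ : ContDiffOn ℝ 1 ψ {y | deriv c y ≠ 0}) (hχ : ContDiffOn ℝ 1 χ {y | deriv c y ≠ 0})
    (hψn : ∀ x ∈ uIcc a b, ⟪ψ x, tau c x⟫ = 0) (hχn : ∀ x ∈ uIcc a b, ⟪χ x, tau c x⟫ = 0) :
    ∫ x in a..b, (⟪nablaS c ψ x, χ x⟫ + ⟪ψ x, nablaS c χ x⟫) * ‖deriv c x‖
      = ⟪ψ b, χ b⟫ - ⟪ψ a, χ a⟫ := by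
  have hU := isOpen_setOf_deriv_ne_zero (hc.continuous_deriv le_rfl)
  have hd : ∀ x ∈ uIcc a b, HasDerivAt (fun y => ⟪ψ y, χ y⟫)
      ((⟪nablaS c ψ x, χ x⟫ + ⟪ψ x, nablaS c χ x⟫) * ‖deriv c x‖) x := by
    intro x hx
    have hψx := ((hψ.differentiableOn one_ne_zero x (hreg x hx)).differentiableAt
      (hU.mem_nhds (hreg x hx))).hasDerivAt
    have hχx := ((hχ.differentiableOn one_ne_zero x (hreg x hx)).differentiableAt
      (hU.mem_nhds (hreg x hx))).hasDerivAt
    refine (hψx.inner ℝ hχx).congr_deriv ?_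
    rw [← norm_smul_sDeriv ψ (hreg x hx), ← norm_smul_sDeriv χ (hreg x hx),
      real_inner_smul_left, real_inner_smul_right, real_inner_comm (sDeriv c χ x),
      ← inner_nablaS_of_inner_tau_eq_zero ψ (hχn x hx),
      ← inner_nablaS_of_inner_tau_eq_zero χ (hψn x hx), real_inner_comm (nablaS c χ x)]
    ring
  have hcont : ContinuousOn (fun x => (⟪nablaS c ψ x, χ x⟫ + ⟪ψ x, nablaS c χ x⟫)
      * ‖deriv c x‖) (uIcc a b) := by
    have hc' : ContDiff ℝ (0 + 1) c := by simpa using hc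
    have hψ' := (contDiffOn_nablaS hc' (by simpa using hψ)).continuousOn.mono hreg
    have hχ' := (contDiffOn_nablaS hc' (by simpa using hχ)).continuousOn.mono hreg
    have hψ := hψ.continuousOn.mono hreg
    have hχ := hχ.continuousOn.mono hreg
    have hρ := (hc.continuous_deriv le_rfl).norm.continuousOn (s := uIcc a b)
    fun_prop
  exact intervalIntegral.integral_eq_sub_of_hasDerivAt hd hcont.intervalIntegrable

end IntegrationByParts

section Elastic

variable {n : ℕ} {c : ℝ → EuclideanSpace ℝ (Fin n)} {a b : ℝ}

theorem integral_inner_kappa_of_elastic {V : ℝ → EuclideanSpace ℝ (Fin n)} {lam : ℝ}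
    (hc : ContDiff ℝ 4 c) (hreg : ∀ x ∈ uIcc a b, deriv c x ≠ 0)
    (hκa : kappa c a = 0) (hκb : kappa c b = 0)
    (hV : ∀ x ∈ uIcc a b, V x = -nablaS c (nablaS c (kappa c)) x
      - ((1 / 2 : ℝ) * ‖kappa c x‖ ^ 2) • kappa c x + lam • kappa c x) :
    ∫ x in a..b, ⟪kappa c x, V x⟫ * ‖deriv c x‖
      = (∫ x in a..b, ‖nablaS c (kappa c) x‖ ^ 2 * ‖deriv c x‖)
        - 1 / 2 * (∫ x in a..b, ‖kappa c x‖ ^ 4 * ‖deriv c x‖)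
        + lam * ∫ x in a..b, ‖kappa c x‖ ^ 2 * ‖deriv c x‖ := by
  have hdc := (hc.of_le (by norm_num : (2 : WithTop ℕ∞) ≤ 4)).differentiable_deriv_two
  have hκ : ContDiffOn ℝ (1 + 1) (kappa c) {y | deriv c y ≠ 0} :=
    contDiffOn_kappa (hc.of_le (by norm_num))
  have hκ' : ContDiffOn ℝ (0 + 1) (nablaS c (kappa c)) {y | deriv c y ≠ 0} :=
    by simpa using contDiffOn_nablaS (hc.of_le (by norm_num)) hκ
  have hibp := integral_inner_nablaS_add_inner_nablaS (hc.of_le (by norm_num)) hreg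
    (hκ.of_le (by norm_num)) (by simpa using hκ')
    (fun x hx => inner_kappa_tau (hdc x) (hreg x hx))
    (fun x hx => inner_nablaS_tau _ (hreg x hx))
  rw [hκa, hκb, inner_zero_left, inner_zero_left, sub_zero] at hibp
  have hκc := hκ.continuousOn.mono hreg
  have hκc' := hκ'.continuousOn.mono hreg
  have hκc'' := (contDiffOn_nablaS (hc.of_le (by norm_num)) hκ').continuousOn.mono hreg
  have hρ := (hc.continuous_deriv (by norm_num)).norm.continuousOn (s := uIcc a b)
  have hpt : EqOn (fun x => ⟪kappa c x, V x⟫ * ‖deriv c x‖) (fun x =>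
      ‖nablaS c (kappa c) x‖ ^ 2 * ‖deriv c x‖
        - (⟪nablaS c (kappa c) x, nablaS c (kappa c) x⟫
          + ⟪kappa c x, nablaS c (nablaS c (kappa c)) x⟫) * ‖deriv c x‖
        - 1 / 2 * (‖kappa c x‖ ^ 4 * ‖deriv c x‖) + lam * (‖kappa c x‖ ^ 2 * ‖deriv c x‖))
      (uIcc a b) := fun x hx => by
    simp only [hV x hx, inner_add_right, inner_sub_right, inner_neg_right,
      real_inner_smul_right, real_inner_self_eq_norm_sq]
    ring
  rw [intervalIntegral.integral_congr hpt, intervalIntegral.integral_add,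
    intervalIntegral.integral_sub, intervalIntegral.integral_sub, hibp,
    intervalIntegral.integral_const_mul, intervalIntegral.integral_const_mul]
  · ring
  all_goals exact ContinuousOn.intervalIntegrable (by fun_prop)

end Elastic

section FirstVariation

variable {n : ℕ} {f : ℝ → ℝ → EuclideanSpace ℝ (Fin n)} {t : ℝ}

theorem hasDerivAt_curveLen (hf : ContDiff ℝ 2 (uncurry f))
    (hreg : ∀ x ∈ Icc (0 : ℝ) 1, deriv (f t) x ≠ 0) :
    HasDerivAt (fun s => curveLen (f s))
      (∫ x in (0 : ℝ)..1, ⟪deriv (pT f t) x, tau (f t) x⟫) t := by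
  have hfx : ContDiff ℝ 1 (uncurry fun s => deriv (f s)) := hf.uncurry_deriv
  have hftx : Continuous (uncurry (pT fun s => deriv (f s))) :=
    (hfx.uncurry_pT (m := 0)).continuous
  have hU : IsOpen {p : ℝ × ℝ | deriv (f p.1) p.2 ≠ 0} :=
    isOpen_ne_fun hfx.continuous continuous_const
  have hτ : ContinuousOn (fun p : ℝ × ℝ => tau (f p.1) p.2) {p | deriv (f p.1) p.2 ≠ 0} :=
    (hfx.continuous.norm.continuousOn.inv₀ fun _ hp => norm_ne_zero_iff.2 hp).smul
      hfx.continuous.continuousOn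
  have hlen := hasDerivAt_intervalIntegral_of_continuousOn
    (G := fun s x => ‖deriv (f s) x‖)
    (G' := fun s x => ⟪pT (fun s => deriv (f s)) s x, tau (f s) x⟫) hU
    (fun x hx => hreg x (by rwa [uIcc_of_le zero_le_one] at hx)) hfx.continuous.norm
    (hftx.continuousOn.inner hτ) (by
      rintro ⟨s, x⟩ hp
      refine ((hasDerivAt_fderiv_fst (hfx.differentiable one_ne_zero (s, x))).differentiableAt
        |>.hasDerivAt.norm hp).congr_deriv ?_
      rw [tau, sDeriv, real_inner_smul_right, real_inner_comm, div_eq_inv_mul]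
      rfl)
  simp only [pT_deriv_comm hf] at hlen
  exact hlen

theorem deriv_curveLen_eq {V : ℝ → EuclideanSpace ℝ (Fin n)} {φ : ℝ → ℝ}
    (hf : ContDiff ℝ 2 (uncurry f)) (hV : Differentiable ℝ V) (hφ : ContDiff ℝ 1 φ)
    (hreg : ∀ x ∈ Icc (0 : ℝ) 1, deriv (f t) x ≠ 0)
    (hnormal : ∀ x ∈ Icc (0 : ℝ) 1, ⟪V x, tau (f t) x⟫ = 0)
    (hflow : ∀ x ∈ Icc (0 : ℝ) 1, pT f t x = V x + φ x • tau (f t) x) :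
    deriv (fun s => curveLen (f s)) t
      = φ 1 - φ 0 - ∫ x in (0 : ℝ)..1, ⟪kappa (f t) x, V x⟫ * ‖deriv (f t) x‖ := by
  have hc := hf.uncurry_left t
  have hpt : EqOn (fun x => ⟪deriv (pT f t) x, tau (f t) x⟫)
      (fun x => deriv φ x - ⟪kappa (f t) x, V x⟫ * ‖deriv (f t) x‖) (Ioo 0 1) := by
    intro x hx
    have hnear : Icc (0 : ℝ) 1 ∈ 𝓝 x := Icc_mem_nhds hx.1 hx.2
    dsimp only
    rw [EventuallyEq.deriv_eq (eventually_of_mem hnear hflow)]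
    exact inner_deriv_add_smul_tau_tau (hc.differentiable_deriv_two x)
      (hreg x (Ioo_subset_Icc_self hx)) (hV x) (hφ.differentiable one_ne_zero x)
      (eventually_of_mem hnear hnormal)
  have hκV : ContinuousOn (fun x => ⟪kappa (f t) x, V x⟫ * ‖deriv (f t) x‖) (uIcc 0 1) := by
    have hκ := (contDiffOn_kappa (m := 0) (hc.of_le (by norm_num))).continuousOn.mono
      fun x (hx : x ∈ uIcc 0 1) => hreg x (by rwa [uIcc_of_le zero_le_one] at hx)
    have hV := hV.continuous.continuousOn (s := uIcc 0 1)
    have hρ := (hc.continuous_deriv one_le_two).norm.continuousOn (s := uIcc 0 1)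
    fun_prop
  have hφ' := (hφ.continuous_deriv le_rfl).intervalIntegrable (μ := volume) 0 1
  rw [(hasDerivAt_curveLen hf hreg).deriv,
    intervalIntegral.integral_congr_Ioo_of_le zero_le_one hpt,
    intervalIntegral.integral_sub hφ' hκV.intervalIntegrable,
    intervalIntegral.integral_deriv_eq_sub (fun x _ => hφ.differentiable one_ne_zero x) hφ']

end FirstVariation

theorem tangential_component_at_junction_general {n : ℕ} (T : ℝ)
    (f V : ℝ → ℝ → EuclideanSpace ℝ (Fin n)) (φ : ℝ → ℝ → ℝ) (lam : ℝ)
    (hf : ContDiff ℝ (⊤ : ℕ∞) (Function.uncurry f))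
    (hV : ContDiff ℝ (⊤ : ℕ∞) (Function.uncurry V))
    (hφ : ContDiff ℝ (⊤ : ℕ∞) (Function.uncurry φ))
    (hreg : ∀ t ∈ Ico (0 : ℝ) T, ∀ x ∈ Icc (0 : ℝ) 1, deriv (f t) x ≠ 0)
    (hnormal : ∀ t ∈ Ico (0 : ℝ) T, ∀ x ∈ Icc (0 : ℝ) 1, ⟪V t x, tau (f t) x⟫ = 0)
    (hflow : ∀ t ∈ Ico (0 : ℝ) T, ∀ x ∈ Icc (0 : ℝ) 1,
      pT f t x = V t x + φ t x • tau (f t) x)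
    (hfix : ∀ t ∈ Ico (0 : ℝ) T, pT f t 1 = 0) :
    (∀ t ∈ Ioo (0 : ℝ) T,
      φ t 1 = 0 ∧
      φ t 0 = -deriv (fun s => curveLen (f s)) t
          - ∫ x in (0 : ℝ)..1, ⟪kappa (f t) x, V t x⟫ * ‖deriv (f t) x‖)
    ∧ ((∀ t ∈ Ico (0 : ℝ) T, ∀ x ∈ Icc (0 : ℝ) 1,
          V t x = -nablaS (f t) (nablaS (f t) (kappa (f t))) x
              - ((1 / 2 : ℝ) * ‖kappa (f t) x‖ ^ 2) • kappa (f t) x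
              + lam • kappa (f t) x) →
        (∀ t ∈ Ico (0 : ℝ) T, kappa (f t) 0 = 0 ∧ kappa (f t) 1 = 0) →
        ∀ t ∈ Ioo (0 : ℝ) T,
          deriv (fun s => curveLen (f s)) t + φ t 0
              + (∫ x in (0 : ℝ)..1, ‖nablaS (f t) (kappa (f t)) x‖ ^ 2 * ‖deriv (f t) x‖)
              + lam * ∫ x in (0 : ℝ)..1, ‖kappa (f t) x‖ ^ 2 * ‖deriv (f t) x‖
            = (1 / 2 : ℝ) * ∫ x in (0 : ℝ)..1, ‖kappa (f t) x‖ ^ 4 * ‖deriv (f t) x‖) := by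
  have hI : uIcc (0 : ℝ) 1 = Icc 0 1 := uIcc_of_le zero_le_one
  have first_variation : ∀ t ∈ Ioo (0 : ℝ) T, φ t 1 = 0 ∧ deriv (fun s => curveLen (f s)) t
      = -φ t 0 - ∫ x in (0 : ℝ)..1, ⟪kappa (f t) x, V t x⟫ * ‖deriv (f t) x‖ := by
    intro t ht
    have ht' := Ioo_subset_Ico_self ht
    have h1 : (1 : ℝ) ∈ Icc (0 : ℝ) 1 := right_mem_Icc.2 zero_le_one
    have hφ1 : φ t 1 = 0 := by
      rw [← inner_add_smul_tau_tau (hnormal t ht' 1 h1) (hreg t ht' 1 h1) (φ t 1),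
        ← hflow t ht' 1 h1, hfix t ht', inner_zero_left]
    refine ⟨hφ1, ?_⟩
    rw [deriv_curveLen_eq (hf.of_le ENat.LEInfty.out)
      ((hV.uncurry_left t).differentiable (by simp))
      ((hφ.uncurry_left t).of_le ENat.LEInfty.out) (hreg t ht') (hnormal t ht') (hflow t ht'),
      hφ1]
    ring
  refine ⟨fun t ht => ⟨(first_variation t ht).1, by linarith [(first_variation t ht).2]⟩, ?_⟩
  intro hVform hκ t ht
  have ht' := Ioo_subset_Ico_self ht
  rw [(first_variation t ht).2, integral_inner_kappa_of_elastic
    ((hf.uncurry_left t).of_le ENat.LEInfty.out) (hI ▸ hreg t ht') (hκ t ht').1 (hκ t ht').2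
    (hI ▸ hVform t ht')]
  ring

/-- The tangential component at the moving end-point:  if `∂ₜ f = V + φτ` and the end-point
`x = 1` is fixed, then `φ(t,1) = 0` and `φ(t,0) = −d/dt L(f) − ∫⟨κ, V⟩ ds`; moreover, for the
elastic flow with `κ = 0` at both end-points,
`d/dt L(f) + φ(t,0) + ∫|∇ₛκ|² ds + λ∫|κ|² ds = ½∫|κ|⁴ ds`. -/
theorem tangential_component_at_junction {n : ℕ} (hn : 2 ≤ n) (T : ℝ) (hT : 0 < T)
    (f V : ℝ → ℝ → EuclideanSpace ℝ (Fin n)) (φ : ℝ → ℝ → ℝ) (lam : ℝ)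
    (hf : ContDiff ℝ (⊤ : ℕ∞) (Function.uncurry f))
    (hV : ContDiff ℝ (⊤ : ℕ∞) (Function.uncurry V))
    (hφ : ContDiff ℝ (⊤ : ℕ∞) (Function.uncurry φ))
    (hreg : ∀ t ∈ Ico (0 : ℝ) T, ∀ x ∈ Icc (0 : ℝ) 1, deriv (f t) x ≠ 0)
    (hnormal : ∀ t ∈ Ico (0 : ℝ) T, ∀ x ∈ Icc (0 : ℝ) 1, ⟪V t x, tau (f t) x⟫ = 0)
    (hflow : ∀ t ∈ Ico (0 : ℝ) T, ∀ x ∈ Icc (0 : ℝ) 1,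
      pT f t x = V t x + φ t x • tau (f t) x)
    (hfix : ∀ t ∈ Ico (0 : ℝ) T, pT f t 1 = 0) :
    (∀ t ∈ Ioo (0 : ℝ) T,
      φ t 1 = 0 ∧
      φ t 0 = -deriv (fun s => curveLen (f s)) t
          - ∫ x in (0 : ℝ)..1, ⟪kappa (f t) x, V t x⟫ * ‖deriv (f t) x‖)
    ∧ ((∀ t ∈ Ico (0 : ℝ) T, ∀ x ∈ Icc (0 : ℝ) 1,
          V t x = -nablaS (f t) (nablaS (f t) (kappa (f t))) x
              - ((1 / 2 : ℝ) * ‖kappa (f t) x‖ ^ 2) • kappa (f t) x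
              + lam • kappa (f t) x) →
        (∀ t ∈ Ico (0 : ℝ) T, kappa (f t) 0 = 0 ∧ kappa (f t) 1 = 0) →
        ∀ t ∈ Ioo (0 : ℝ) T,
          deriv (fun s => curveLen (f s)) t + φ t 0
              + (∫ x in (0 : ℝ)..1, ‖nablaS (f t) (kappa (f t)) x‖ ^ 2 * ‖deriv (f t) x‖)
              + lam * ∫ x in (0 : ℝ)..1, ‖kappa (f t) x‖ ^ 2 * ‖deriv (f t) x‖
            = (1 / 2 : ℝ) * ∫ x in (0 : ℝ)..1, ‖kappa (f t) x‖ ^ 4 * ‖deriv (f t) x‖) :=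
  tangential_component_at_junction_general T f V φ lam hf hV hφ hreg hnormal hflow hfix
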